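/- Duality gap characterization via convexification: the optimal value of the Lagrangian dual sup_{λ} inf_{x ∈ D}(cᵀx + λᵀ(b − Ax)) for min{cᵀx : Ax = b, x ∈ D} with D ⊆ ℝⁿ finite equals inf{cᵀx : Ax = b, x ∈ conv(D)} (assuming the latter is feasible); in particular the Lagrangian dual bound equals the optimum over the convex hull of the discrete set, and hence lies between the LP and integer optimal values. -/

import Mathlib

/-!
For fixed `λ` the Lagrangian `x ↦ cᵀx + λᵀ(b - Ax)` is affine, so its minimum over `D` is also its
minimum over `conv D`; at a feasible point it equals `cᵀx`, which gives weak duality.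
Conversely, if `r < cᵀx` at every feasible point of the compact convex set `K = conv D`, then
`(b, r)` lies outside the closed convex set `{(Ax, cᵀx + t) : x ∈ K, t ≥ 0}`. A separating
functional `(y, s) ↦ ψ y + μ s` has `μ ≥ 0` because the set is unbounded upwards in `s`, and
`μ ≠ 0` because `K` contains a feasible point; then `λ = -ψ / μ` satisfies `r < cᵀx + λᵀ(b - Ax)`
on `K`, in particular on `D`.
-/

open Matrix Set Pointwise

theorem nonneg_of_forall_lt_add_mul {u a μ : ℝ} (h : ∀ t : ℝ, 0 ≤ t → u < a + t * μ) :
    0 ≤ μ := by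
  by_contra! hμ
  have hu := h ((a - u) / -μ) (div_nonneg (by linarith [h 0 le_rfl]) (by linarith))
  rw [div_neg, neg_mul, div_mul_cancel₀ _ hμ.ne] at hu
  linarith

theorem exists_lagrangian_le_of_mem_convexHull {E F : Type*} [AddCommGroup E] [Module ℝ E]
    [AddCommGroup F] [Module ℝ F] {D : Set E} (f : E →ₗ[ℝ] ℝ) (T : E →ₗ[ℝ] F)
    (ℓ : F →ₗ[ℝ] ℝ) {b : F} {x : E} (hx : x ∈ convexHull ℝ D) (hTx : T x = b) :
    ∃ d ∈ D, f d + ℓ (b - T d) ≤ f x := by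
  have hconcave : ConcaveOn ℝ univ fun y => f y + ℓ (b - T y) := by
    refine (((f - ℓ ∘ₗ T).concaveOn convex_univ).add_const (ℓ b)).congr fun y _ => ?_
    simp only [Pi.add_apply, LinearMap.sub_apply, LinearMap.comp_apply, map_sub]
    ring
  obtain ⟨d, hd, hle⟩ := hconcave.exists_le_of_mem_convexHull (subset_univ D) hx
  exact ⟨d, hd, by simpa [hTx] using hle⟩

theorem exists_lt_lagrangian_of_lt_on_feasible {E F : Type*} [AddCommGroup E] [Module ℝ E]
    [TopologicalSpace E] [AddCommGroup F] [Module ℝ F] [TopologicalSpace F] [T1Space F]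
    [IsTopologicalAddGroup F] [ContinuousSMul ℝ F] [LocallyConvexSpace ℝ F] {K : Set E}
    (hK : IsCompact K) (hKc : Convex ℝ K) (f : E →L[ℝ] ℝ) (T : E →L[ℝ] F) {b : F}
    (hfeas : ∃ x ∈ K, T x = b) {r : ℝ} (hr : ∀ x ∈ K, T x = b → r < f x) :
    ∃ ℓ : StrongDual ℝ F, ∀ x ∈ K, r < f x + ℓ (b - T x) := by
  set Q : Set (F × ℝ) := T.prod f '' K + ({0} : Set F) ×ˢ Ici 0
  have hQ : IsClosed Q :=
    (isClosed_singleton.prod isClosed_Ici).add_left_of_isCompact (hK.image (T.prod f).continuous)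
  have hQc : Convex ℝ Q :=
    (hKc.linear_image (T.prod f).toLinearMap).add ((convex_singleton 0).prod (convex_Ici 0))
  have hmem : ∀ x ∈ K, ∀ t : ℝ, 0 ≤ t → (T x, f x + t) ∈ Q := fun x hx t ht =>
    ⟨(T x, f x), ⟨x, hx, rfl⟩, (0, t), ⟨rfl, ht⟩, by simp⟩
  have hbr : (b, r) ∉ Q := by
    rintro ⟨_, ⟨x, hx, rfl⟩, ⟨_, t⟩, ⟨rfl : _ = 0, ht : 0 ≤ t⟩, hsum⟩
    simp only [ContinuousLinearMap.prod_apply, Prod.mk_add_mk, add_zero, Prod.mk.injEq] at hsum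
    linarith [hr x hx hsum.1]
  obtain ⟨φ, u, hφbr, hφQ⟩ := geometric_hahn_banach_point_closed hQc hQ hbr
  set μ := φ (0, 1)
  set ψ : StrongDual ℝ F := φ.comp (ContinuousLinearMap.inl ℝ F ℝ)
  have hφ : ∀ y s, φ (y, s) = ψ y + s * μ := fun y s => by
    rw [show ((y, s) : F × ℝ) = (y, 0) + s • (0, 1) by simp, map_add, map_smul, smul_eq_mul]
    rfl
  have hφK : ∀ x ∈ K, ∀ t : ℝ, 0 ≤ t → u < ψ (T x) + f x * μ + t * μ := fun x hx t ht => by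
    simpa only [hφ, add_mul, ← add_assoc] using hφQ _ (hmem x hx t ht)
  rw [hφ] at hφbr
  obtain ⟨x₀, hx₀, hTx₀⟩ := hfeas
  have hμ : 0 < μ := by
    refine (nonneg_of_forall_lt_add_mul (hφK x₀ hx₀)).lt_of_ne fun hμ => ?_
    have hx₀K := hφK x₀ hx₀ 0 le_rfl
    rw [hTx₀, ← hμ] at hx₀K
    rw [← hμ] at hφbr
    linarith
  refine ⟨-μ⁻¹ • ψ, fun x hx => ?_⟩
  have hxK := hφK x hx 0 le_rfl
  rw [_root_.smul_apply, map_sub, smul_eq_mul, ← sub_pos]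
  field_simp
  nlinarith

theorem geoffrion_dual_equals_convexification_general {n m : ℕ}
    (D : Set (Fin n → ℝ)) (hDfin : D.Finite)
    (c : Fin n → ℝ) (A : Matrix (Fin m) (Fin n) ℝ) (b : Fin m → ℝ)
    (hfeas : {x : Fin n → ℝ | x ∈ convexHull ℝ D ∧ A.mulVec x = b}.Nonempty) :
    (⨆ lam : Fin m → ℝ,
        ⨅ x : D, ((∑ j, c j * (x : Fin n → ℝ) j
          + ∑ i, lam i * (b i - A.mulVec (x : Fin n → ℝ) i) : ℝ) : EReal))
    = ⨅ x : {x : Fin n → ℝ // x ∈ convexHull ℝ D ∧ A.mulVec x = b},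
        ((∑ j, c j * (x : Fin n → ℝ) j : ℝ) : EReal) := by
  simp only [← Pi.sub_apply, ← dotProduct.eq_1]
  refine le_antisymm (iSup_le fun lam => le_iInf fun x => ?_)
    (EReal.ge_of_forall_gt_iff_ge.1 fun r hr => ?_)
  · obtain ⟨d, hd, hle⟩ := exists_lagrangian_le_of_mem_convexHull (dotProductBilin ℝ ℝ c)
      A.mulVecLin (dotProductBilin ℝ ℝ lam) x.2.1 x.2.2
    exact (iInf_le _ (⟨d, hd⟩ : D)).trans (EReal.coe_le_coe hle)
  · have hr_feasible : ∀ x ∈ convexHull ℝ D, A *ᵥ x = b → r < c ⬝ᵥ x := fun x hx hAx =>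
      EReal.coe_lt_coe_iff.1 (hr.trans_le (iInf_le _ (⟨x, hx, hAx⟩ : {x // _})))
    obtain ⟨ℓ, hℓ⟩ := exists_lt_lagrangian_of_lt_on_feasible (hDfin.isCompact_convexHull ℝ)
      (convex_convexHull ℝ D) (dotProductBilin ℝ ℝ c).toContinuousLinearMap
      A.mulVecLin.toContinuousLinearMap hfeas hr_feasible
    set lam := (dotProductEquiv ℝ (Fin m)).symm ℓ.toLinearMap
    have hlam : ∀ v, ℓ v = lam ⬝ᵥ v := fun v =>
      LinearMap.congr_fun ((dotProductEquiv ℝ _).apply_symm_apply ℓ.toLinearMap).symm v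
    refine le_iSup_of_le lam (le_iInf fun d => EReal.coe_le_coe ?_)
    simpa [hlam] using (hℓ d (subset_convexHull ℝ D d.2)).le

/-- Geoffrion's duality-gap characterization. For
`min {cᵀx : Ax = b, x ∈ D}` with `D` finite and nonempty and
`{x ∈ conv(D) : Ax = b} ≠ ∅`, the Lagrangian dual optimal value
`sup_λ inf_{x∈D} (cᵀx + λᵀ(b − Ax))` equals
`inf {cᵀx : x ∈ conv(D), Ax = b}` (values in `EReal`). -/
theorem geoffrion_dual_equals_convexification {n m : ℕ}
    (D : Set (Fin n → ℝ)) (hDfin : D.Finite) (hDne : D.Nonempty)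
    (c : Fin n → ℝ) (A : Matrix (Fin m) (Fin n) ℝ) (b : Fin m → ℝ)
    (hfeas : {x : Fin n → ℝ | x ∈ convexHull ℝ D ∧ A.mulVec x = b}.Nonempty) :
    (⨆ lam : Fin m → ℝ,
        ⨅ x : D, ((∑ j, c j * (x : Fin n → ℝ) j
          + ∑ i, lam i * (b i - A.mulVec (x : Fin n → ℝ) i) : ℝ) : EReal))
    = ⨅ x : {x : Fin n → ℝ // x ∈ convexHull ℝ D ∧ A.mulVec x = b},
        ((∑ j, c j * (x : Fin n → ℝ) j : ℝ) : EReal) :=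
  geoffrion_dual_equals_convexification_general D hDfin c A b hfeas
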